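/- arXiv:1401.6371 — 4 statements merged into one kernel-verified Lean document; each statement's English description precedes it below -/
import Mathlib

section
/- Let A and B be symmetric positive definite k×k matrices and Λ a non-empty subset of ℝ^{k×d} not containing the zero matrix. Define δ_Λ(A|B) = sup_{λ∈Λ} |1 − tr(λᵀAλ)/tr(λᵀBλ)| and δ_Λ(A,B) = max{δ_Λ(A|B), δ_Λ(B|A)}. Then δ_Λ(A,B) ≤ ⦀AB^{−1} − BA^{−1}⦀, where ⦀·⦀ is the operator norm. -/
/-!
Let `S = √B` and let `μ` be the largest eigenvalue of `M = S⁻¹ A S⁻¹`. Then `M ≤ μ` gives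
`A ≤ μ B`, and an eigenvector `v` of `M` gives `w = S⁻¹ v` with `A w = μ B w`. Such a `w` makes
`B w` an eigenvector of `A B⁻¹ - B A⁻¹` with eigenvalue `μ - μ⁻¹`, so for `μ > 1` we get
`μ - 1 ≤ μ - μ⁻¹ ≤ ‖A B⁻¹ - B A⁻¹‖`. Hence `A ≤ (1 + ‖A B⁻¹ - B A⁻¹‖) B`, and symmetrically with
`A` and `B` exchanged; conjugating by `λ` and taking traces bounds both ratios.
-/

open Matrix
open scoped Matrix.Norms.L2Operator MatrixOrder ComplexOrder

theorem abs_one_sub_div_le_of_le_one_add_mul {a b c : ℝ} (ha : 0 < a) (hb : 0 < b)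
    (hab : a ≤ (1 + c) * b) (hba : b ≤ (1 + c) * a) : |1 - a / b| ≤ c := by
  rw [abs_sub_le_iff]
  constructor
  · rw [sub_le_comm, le_div_iff₀ hb]
    nlinarith
  · rw [sub_le_iff_le_add, div_le_iff₀ hb]
    linarith

namespace Matrix

variable {n m : Type*} [Fintype n] [Fintype m]

theorem trace_transpose_mul_mul_le_of_le {A B : Matrix n n ℝ} (h : A ≤ B) (L : Matrix n m ℝ) :
    (Lᵀ * A * L).trace ≤ (Lᵀ * B * L).trace := by
  have := ((le_iff.mp h).conjTranspose_mul_mul_same L).trace_nonneg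
  rwa [conjTranspose_eq_transpose_of_trivial, Matrix.mul_sub, Matrix.sub_mul, trace_sub,
    sub_nonneg] at this

theorem PosDef.trace_transpose_mul_mul_pos {B : Matrix n n ℝ} (hB : B.PosDef) {L : Matrix n m ℝ}
    (hL : L ≠ 0) : 0 < (Lᵀ * B * L).trace := by
  have hX : (Lᵀ * B * L).PosSemidef := by
    simpa using hB.posSemidef.conjTranspose_mul_mul_same L
  refine hX.trace_nonneg.lt_of_ne' fun h => hL ?_
  ext i j
  have hj : Lᵀ j ⬝ᵥ B *ᵥ Lᵀ j = 0 := by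
    rw [dotProduct_mulVec]
    exact congrFun₂ (hX.trace_eq_zero_iff.mp h) j j
  by_contra hij
  have hLj : Lᵀ j ≠ 0 := fun h0 => hij (by simpa using congrFun h0 i)
  simpa [hj] using hB.dotProduct_mulVec_pos hLj

variable [DecidableEq n]

theorem norm_le_l2_opNorm_of_mulVec_eq_smul {𝕜 : Type*} [RCLike 𝕜] (C : Matrix n n 𝕜)
    {u : n → 𝕜} {ν : 𝕜} (hu : u ≠ 0) (h : C *ᵥ u = ν • u) : ‖ν‖ ≤ ‖C‖ := by
  have hle := C.l2_opNorm_mulVec (WithLp.toLp 2 u)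
  have hpos : 0 < ‖WithLp.toLp 2 u‖ := norm_pos_iff.mpr (by simpa using hu)
  rw [WithLp.ofLp_toLp, h] at hle
  exact le_of_mul_le_mul_right (by simpa [norm_smul] using hle) hpos

theorem IsHermitian.exists_le_smul_one_and_mulVec_eq_smul {𝕜 : Type*} [RCLike 𝕜] [Nonempty n]
    {M : Matrix n n 𝕜} (hM : M.IsHermitian) :
    ∃ μ : ℝ, M ≤ μ • 1 ∧ ∃ v ≠ 0, M *ᵥ v = μ • v := by
  obtain ⟨i, hi⟩ := Finite.exists_max hM.eigenvalues
  refine ⟨hM.eigenvalues i, ?_, _, ?_, hM.mulVec_eigenvectorBasis i⟩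
  · rw [← Algebra.algebraMap_eq_smul_one]
    refine le_algebraMap_of_spectrum_le (fun x hx => ?_) hM.isSelfAdjoint
    obtain ⟨j, rfl⟩ := hM.spectrum_real_eq_range_eigenvalues ▸ hx
    exact hi j
  · exact fun h => hM.eigenvectorBasis.orthonormal.ne_zero i
      (WithLp.ofLp_injective 2 (by simpa using h))

theorem IsHermitian.exists_le_smul_and_mulVec_eq_smul_mulVec {𝕜 : Type*} [RCLike 𝕜] [Nonempty n]
    {A B : Matrix n n 𝕜} (hA : A.IsHermitian) (hB : B.PosDef) :
    ∃ μ : ℝ, A ≤ μ • B ∧ ∃ w ≠ 0, A *ᵥ w = μ • B *ᵥ w := by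
  set S := CFC.sqrt B
  have hS : IsUnit S.det := (isUnit_iff_isUnit_det S).mp hB.isStrictlyPositive.isUnit_cfcSqrt
  have hSS : S * S = B := CFC.sqrt_mul_sqrt_self B hB.posSemidef.nonneg
  have hSH : S.IsHermitian := (CFC.sqrt_nonneg B).isSelfAdjoint
  set M := S⁻¹ * A * S⁻¹
  have hM : M.IsHermitian := by
    simp only [M, IsHermitian, conjTranspose_mul, hSH.inv.eq, hA.eq, mul_assoc]
  have hAM : A = S * M * S := by
    simp only [M, ← mul_assoc, mul_nonsing_inv S hS, one_mul]
    rw [mul_assoc, nonsing_inv_mul S hS, mul_one]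
  obtain ⟨μ, hle, v, hv, hMv⟩ := hM.exists_le_smul_one_and_mulVec_eq_smul
  refine ⟨μ, ?_, S⁻¹ *ᵥ v, ?_, ?_⟩
  · calc A = S * M * S := hAM
      _ ≤ S * (μ • 1) * S := IsSelfAdjoint.conjugate_le_conjugate hle hSH.isSelfAdjoint
      _ = μ • B := by rw [mul_smul_comm, mul_one, smul_mul_assoc, hSS]
  · intro h
    apply hv
    simpa [mulVec_mulVec, mul_nonsing_inv S hS] using congrArg (S *ᵥ ·) h
  · have hAS : A * S⁻¹ = S * M := by rw [hAM, mul_assoc, mul_nonsing_inv S hS, mul_one]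
    have hBS : B * S⁻¹ = S := by rw [← hSS, mul_assoc, mul_nonsing_inv S hS, mul_one]
    rw [mulVec_mulVec, mulVec_mulVec, hAS, hBS, ← mulVec_mulVec, hMv, mulVec_smul]

theorem mul_inv_sub_mul_inv_mulVec_of_mulVec_eq_smul_mulVec {K : Type*} [Field K]
    {A B : Matrix n n K} (hA : IsUnit A.det) (hB : IsUnit B.det) {μ : K} (hμ : μ ≠ 0)
    {w : n → K} (h : A *ᵥ w = μ • B *ᵥ w) :
    (A * B⁻¹ - B * A⁻¹) *ᵥ (B *ᵥ w) = (μ - μ⁻¹) • B *ᵥ w := by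
  have hAB : A⁻¹ *ᵥ (B *ᵥ w) = μ⁻¹ • w := by
    rw [← inv_smul_smul₀ hμ (B *ᵥ w), ← h, mulVec_smul, mulVec_mulVec, nonsing_inv_mul A hA,
      one_mulVec]
  rw [sub_mulVec, ← mulVec_mulVec, ← mulVec_mulVec, mulVec_mulVec w B⁻¹, nonsing_inv_mul B hB,
    one_mulVec, hAB, h, mulVec_smul, sub_smul]

theorem PosDef.le_one_add_norm_smul {A B : Matrix n n ℝ} (hA : A.PosDef) (hB : B.PosDef) :
    A ≤ (1 + ‖A * B⁻¹ - B * A⁻¹‖) • B := by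
  cases isEmpty_or_nonempty n
  · exact (Subsingleton.elim _ _).le
  obtain ⟨μ, hle, w, hw, hAw⟩ := hA.isHermitian.exists_le_smul_and_mulVec_eq_smul_mulVec hB
  have hμ : μ ≤ 1 + ‖A * B⁻¹ - B * A⁻¹‖ := by
    rcases le_or_gt μ 1 with hμ1 | hμ1
    · linarith [norm_nonneg (A * B⁻¹ - B * A⁻¹)]
    have hBw : B *ᵥ w ≠ 0 := fun h => hw (eq_zero_of_mulVec_eq_zero hB.det_pos.ne' h)
    have hC := norm_le_l2_opNorm_of_mulVec_eq_smul _ hBw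
      (mul_inv_sub_mul_inv_mulVec_of_mulVec_eq_smul_mulVec hA.det_pos.ne'.isUnit
        hB.det_pos.ne'.isUnit (by positivity) hAw)
    have : μ - 1 ≤ μ - μ⁻¹ := by gcongr; exact inv_le_one_of_one_le₀ hμ1.le
    rw [Real.norm_eq_abs] at hC
    linarith [le_abs_self (μ - μ⁻¹)]
  refine hle.trans (le_iff.mpr ?_)
  rw [← sub_smul]
  exact hB.posSemidef.smul (sub_nonneg.mpr hμ)

end Matrix

theorem stmt_5_general {k d : ℕ} (A B : Matrix (Fin k) (Fin k) ℝ)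
    (hA : A.PosDef) (hB : B.PosDef)
    (Λ : Set (Matrix (Fin k) (Fin d) ℝ)) (h0 : 0 ∉ Λ) :
    ∀ lam ∈ Λ,
      |1 - (lamᵀ * A * lam).trace / (lamᵀ * B * lam).trace| ≤ ‖A * B⁻¹ - B * A⁻¹‖ ∧
      |1 - (lamᵀ * B * lam).trace / (lamᵀ * A * lam).trace| ≤ ‖A * B⁻¹ - B * A⁻¹‖ := by
  intro lam hlam
  have hlam0 : lam ≠ 0 := fun h => h0 (h ▸ hlam)
  have ha := hA.trace_transpose_mul_mul_pos hlam0
  have hb := hB.trace_transpose_mul_mul_pos hlam0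
  have hab := trace_transpose_mul_mul_le_of_le (hA.le_one_add_norm_smul hB) lam
  have hba := trace_transpose_mul_mul_le_of_le (hB.le_one_add_norm_smul hA) lam
  rw [norm_sub_rev] at hba
  simp only [Matrix.mul_smul, Matrix.smul_mul, trace_smul, smul_eq_mul] at hab hba
  exact ⟨abs_one_sub_div_le_of_le_one_add_mul ha hb hab hba,
    abs_one_sub_div_le_of_le_one_add_mul hb ha hba hab⟩

theorem stmt_5 {k d : ℕ} (A B : Matrix (Fin k) (Fin k) ℝ)
    (hA : A.PosDef) (hB : B.PosDef)
    (Λ : Set (Matrix (Fin k) (Fin d) ℝ)) (hne : Λ.Nonempty) (h0 : 0 ∉ Λ) :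
    ∀ lam ∈ Λ,
      |1 - (lamᵀ * A * lam).trace / (lamᵀ * B * lam).trace| ≤ ‖A * B⁻¹ - B * A⁻¹‖ ∧
      |1 - (lamᵀ * B * lam).trace / (lamᵀ * A * lam).trace| ≤ ‖A * B⁻¹ - B * A⁻¹‖ :=
  stmt_5_general A B hA hB Λ h0
end

section
/- Let A, B be symmetric positive definite k×k matrices and λ ∈ ℝ^{k×d} nonzero. Then |tr(λᵀ(B−A)λ)| ≤ ⦀I − B^{−1/2} A B^{−1/2}⦀ · tr(λᵀBλ). -/
/-!
Write `S = B^{1/2}` and `N = I - S⁻¹ A S⁻¹`. Since `S` is symmetric, `B - A = S N S`, so with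
`μ = S λ` the two traces become `tr (μᵀ N μ)` and `tr (μᵀ μ)`. Both split as sums over the
columns `x` of `μ`, and `|xᵀ N x| ≤ ‖N‖ ‖x‖²` by Cauchy–Schwarz.
-/

open Matrix

open scoped Matrix.Norms.L2Operator

namespace Matrix.PosSemidef

open scoped ComplexOrder

/-- The positive semidefinite square root of a positive semidefinite matrix
(the definition Mathlib had in December 2024, since removed). -/
noncomputable def sqrt {n : Type*} [Fintype n] [DecidableEq n] {𝕜 : Type*} [RCLike 𝕜]
    {A : Matrix n n 𝕜} (hA : A.PosSemidef) : Matrix n n 𝕜 :=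
  hA.1.eigenvectorUnitary.1 * diagonal ((↑) ∘ (√·) ∘ hA.1.eigenvalues) *
  (star hA.1.eigenvectorUnitary : Matrix n n 𝕜)

end Matrix.PosSemidef

namespace Matrix.PosSemidef

open scoped ComplexOrder

variable {n 𝕜 : Type*} [Fintype n] [DecidableEq n] [RCLike 𝕜] {A : Matrix n n 𝕜}

lemma conjTranspose_sqrt (hA : A.PosSemidef) : hA.sqrtᴴ = hA.sqrt := by
  simp [sqrt, Matrix.mul_assoc, star_eq_conjTranspose, Pi.star_def, Function.comp_def]

lemma sqrt_mul_self (hA : A.PosSemidef) : hA.sqrt * hA.sqrt = A := by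
  set U := hA.1.eigenvectorUnitary
  set D : Matrix n n 𝕜 := diagonal ((↑) ∘ (√·) ∘ hA.1.eigenvalues)
  have hD : D * D = diagonal ((↑) ∘ hA.1.eigenvalues) := by
    rw [diagonal_mul_diagonal]
    congr 1 with i
    simp [← RCLike.ofReal_mul, Real.mul_self_sqrt (hA.eigenvalues_nonneg i)]
  conv_rhs => rw [hA.1.spectral_theorem, Unitary.conjStarAlgAut_apply]
  calc hA.sqrt * hA.sqrt = U.1 * D * ((star U : Matrix n n 𝕜) * U.1) * D * star U.1 := by
        simp only [sqrt, U, D, Matrix.mul_assoc]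
    _ = _ := by rw [Unitary.coe_star_mul_self, Matrix.mul_one, Matrix.mul_assoc U.1, hD]

end Matrix.PosSemidef

namespace Matrix

variable {m n : Type*} [Fintype m] [Fintype n]

lemma trace_transpose_mul_mul_eq_sum (μ : Matrix m n ℝ) (N : Matrix m m ℝ) :
    (μᵀ * N * μ).trace = ∑ j, μᵀ j ⬝ᵥ N *ᵥ μᵀ j := by
  simp [trace, Matrix.mul_assoc, mul_apply, mulVec, dotProduct]

variable [DecidableEq m]

lemma abs_dotProduct_mulVec_le (N : Matrix m m ℝ) (x : m → ℝ) :
    |x ⬝ᵥ N *ᵥ x| ≤ ‖N‖ * (x ⬝ᵥ x) := by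
  let y : EuclideanSpace ℝ m := WithLp.toLp 2 x
  have hinner : x ⬝ᵥ N *ᵥ x = inner ℝ (WithLp.toLp 2 (N *ᵥ x) : EuclideanSpace ℝ m) y := by
    simp [y, EuclideanSpace.inner_eq_star_dotProduct]
  have hnorm : x ⬝ᵥ x = ‖y‖ ^ 2 := by
    rw [EuclideanSpace.real_norm_sq_eq]
    simp [y, dotProduct, sq]
  calc |x ⬝ᵥ N *ᵥ x| ≤ ‖(WithLp.toLp 2 (N *ᵥ x) : EuclideanSpace ℝ m)‖ * ‖y‖ := by
        rw [hinner]; exact abs_real_inner_le_norm _ _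
    _ ≤ ‖N‖ * ‖y‖ * ‖y‖ := by gcongr; exact N.l2_opNorm_mulVec y
    _ = ‖N‖ * (x ⬝ᵥ x) := by rw [hnorm]; ring

lemma abs_trace_transpose_mul_mul_le (μ : Matrix m n ℝ) (N : Matrix m m ℝ) :
    |(μᵀ * N * μ).trace| ≤ ‖N‖ * (μᵀ * μ).trace := by
  have hμ : (μᵀ * μ).trace = ∑ j, μᵀ j ⬝ᵥ μᵀ j := by
    simpa using trace_transpose_mul_mul_eq_sum μ 1
  rw [trace_transpose_mul_mul_eq_sum, hμ, Finset.mul_sum]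
  exact (Finset.abs_sum_le_sum_abs _ _).trans
    (Finset.sum_le_sum fun j _ => abs_dotProduct_mulVec_le N (μᵀ j))

lemma mul_self_sub_eq {S : Matrix m m ℝ} (hS : IsUnit S) (A : Matrix m m ℝ) :
    S * S - A = S * (1 - S⁻¹ * A * S⁻¹) * S := by
  have hdet := (isUnit_iff_isUnit_det S).mp hS
  simp only [Matrix.mul_sub, Matrix.sub_mul, Matrix.mul_one, Matrix.mul_assoc,
    nonsing_inv_mul _ hdet, mul_nonsing_inv_cancel_left _ _ hdet]

end Matrix

theorem stmt_6_general {k d : ℕ} (A B : Matrix (Fin k) (Fin k) ℝ)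
    (hB : B.PosDef)
    (lam : Matrix (Fin k) (Fin d) ℝ) :
    |(lamᵀ * (B - A) * lam).trace| ≤
      ‖(1 : Matrix (Fin k) (Fin k) ℝ) -
          (hB.posSemidef.sqrt)⁻¹ * A * (hB.posSemidef.sqrt)⁻¹‖ *
        (lamᵀ * B * lam).trace := by
  set S := hB.posSemidef.sqrt
  set N := 1 - S⁻¹ * A * S⁻¹
  have hSS : S * S = B := hB.posSemidef.sqrt_mul_self
  have hST : Sᵀ = S := by
    rw [← conjTranspose_eq_transpose_of_trivial]
    exact hB.posSemidef.conjTranspose_sqrt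
  have hS : IsUnit S := isUnit_of_mul_isUnit_left (hSS ▸ hB.isUnit)
  have hconj (M : Matrix (Fin k) (Fin k) ℝ) :
      lamᵀ * (S * M * S) * lam = (S * lam)ᵀ * M * (S * lam) := by
    rw [transpose_mul, hST]
    simp only [Matrix.mul_assoc]
  calc |(lamᵀ * (B - A) * lam).trace| = |((S * lam)ᵀ * N * (S * lam)).trace| := by
        rw [← hSS, mul_self_sub_eq hS, hconj]
    _ ≤ ‖N‖ * ((S * lam)ᵀ * (S * lam)).trace := abs_trace_transpose_mul_mul_le _ _
    _ = ‖N‖ * (lamᵀ * B * lam).trace := by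
        rw [← hSS, ← Matrix.mul_one (S * lam)ᵀ, ← hconj, Matrix.mul_one]

theorem stmt_6 {k d : ℕ} (A B : Matrix (Fin k) (Fin k) ℝ)
    (hA : A.PosDef) (hB : B.PosDef)
    (lam : Matrix (Fin k) (Fin d) ℝ) (hlam : lam ≠ 0) :
    |(lamᵀ * (B - A) * lam).trace| ≤
      ‖(1 : Matrix (Fin k) (Fin k) ℝ) -
          (hB.posSemidef.sqrt)⁻¹ * A * (hB.posSemidef.sqrt)⁻¹‖ *
        (lamᵀ * B * lam).trace :=
  stmt_6_general A B hB lam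
end

section
/- Let Σ and Σ̂ be symmetric positive definite k×k matrices, Λ ⊆ ℝ^{k×d} non-empty closed convex not containing 0, λ* = argmin_{λ∈Λ} tr(λᵀΣλ) and λ̂ = argmin_{λ∈Λ} tr(λᵀΣ̂λ). Then tr(λ̂ᵀΣλ̂) − tr(λ*ᵀΣλ*) ≤ tr(λ*ᵀΣλ*)·(2δ + δ²), where δ = δ_Λ(Σ̂, Σ) = max{sup_{λ∈Λ}|1 − tr(λᵀΣ̂λ)/tr(λᵀΣλ)|, sup_{λ∈Λ}|1 − tr(λᵀΣλ)/tr(λᵀΣ̂λ)|}. -/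
open Matrix

/-- `δ_Λ(A|B) = sup_{λ∈Λ} |1 − tr(λᵀAλ)/tr(λᵀBλ)|`. -/
noncomputable def deltaOne {k d : ℕ} (A B : Matrix (Fin k) (Fin k) ℝ)
    (Λ : Set (Matrix (Fin k) (Fin d) ℝ)) : ℝ :=
  sSup ((fun lam => |1 - (lamᵀ * A * lam).trace / (lamᵀ * B * lam).trace|) '' Λ)

/-- `δ_Λ(A,B) = max{δ_Λ(A|B), δ_Λ(B|A)}`. -/
noncomputable def deltaSym {k d : ℕ} (A B : Matrix (Fin k) (Fin k) ℝ)
    (Λ : Set (Matrix (Fin k) (Fin d) ℝ)) : ℝ :=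
  max (deltaOne A B Λ) (deltaOne B A Λ)

/-! The estimator `λ̂` is compared with `λ*` through the chain
`tr(λ̂ᵀΣλ̂) ≤ (1+δ) tr(λ̂ᵀΣ̂λ̂) ≤ (1+δ) tr(λ*ᵀΣ̂λ*) ≤ (1+δ)² tr(λ*ᵀΣλ*)`:
the outer steps are the definition of `δ`, the middle one is the minimality of `λ̂` for `Σ̂`.
The quadratic forms are positive on `Λ` because `0 ∉ Λ`, which is what allows clearing the
denominators in `δ`. -/

theorem Matrix.PosDef.trace_transpose_mul_mul_pos_s11 {m n : Type*} [Fintype m] [Fintype n]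
    {P : Matrix m m ℝ} (hP : P.PosDef) {B : Matrix m n ℝ} (hB : B ≠ 0) :
    0 < (Bᵀ * P * B).trace := by
  have hdiag (j : n) : (Bᵀ * P * B) j j = Bᵀ j ⬝ᵥ (P *ᵥ Bᵀ j) := by
    rw [mul_apply', dotProduct_mulVec, ← mul_apply_eq_vecMul]
    rfl
  obtain ⟨j, hj⟩ : ∃ j, Bᵀ j ≠ 0 := by
    by_contra! h
    exact hB (transpose_eq_zero.mp (funext h))
  refine Finset.sum_pos' (fun i _ => ?_) ⟨j, Finset.mem_univ j, ?_⟩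
  · exact (hP.posSemidef.conjTranspose_mul_mul_same B).diag_nonneg
  · simpa [hdiag] using hP.dotProduct_mulVec_pos hj

theorem le_one_add_mul_of_abs_one_sub_div_le {a b δ : ℝ} (hb : 0 < b)
    (h : |1 - a / b| ≤ δ) : a ≤ (1 + δ) * b := by
  have hab : a / b ≤ 1 + δ := by linarith [neg_le_of_abs_le h]
  rwa [div_le_iff₀ hb] at hab

theorem abs_one_sub_div_le_deltaOne {k d : ℕ} {A B : Matrix (Fin k) (Fin k) ℝ}
    {Λ : Set (Matrix (Fin k) (Fin d) ℝ)}
    (hbdd : BddAbove ((fun lam => |1 - (lamᵀ * A * lam).trace / (lamᵀ * B * lam).trace|) '' Λ))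
    {lam : Matrix (Fin k) (Fin d) ℝ} (hlam : lam ∈ Λ) :
    |1 - (lamᵀ * A * lam).trace / (lamᵀ * B * lam).trace| ≤ deltaOne A B Λ :=
  le_csSup hbdd (Set.mem_image_of_mem _ hlam)

theorem stmt_11_general {k d : ℕ} (S Shat : Matrix (Fin k) (Fin k) ℝ)
    (hS : S.PosDef) (hShat : Shat.PosDef)
    (Λ : Set (Matrix (Fin k) (Fin d) ℝ)) (h0 : 0 ∉ Λ)
    (hbdd₁ : BddAbove
      ((fun lam => |1 - (lamᵀ * Shat * lam).trace / (lamᵀ * S * lam).trace|) '' Λ))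
    (hbdd₂ : BddAbove
      ((fun lam => |1 - (lamᵀ * S * lam).trace / (lamᵀ * Shat * lam).trace|) '' Λ))
    (lamstar lamhat : Matrix (Fin k) (Fin d) ℝ)
    (hstar : lamstar ∈ Λ)
    (hhat : lamhat ∈ Λ)
    (hhatmin : ∀ lam ∈ Λ, (lamhatᵀ * Shat * lamhat).trace ≤ (lamᵀ * Shat * lam).trace) :
    (lamhatᵀ * S * lamhat).trace - (lamstarᵀ * S * lamstar).trace ≤
      (lamstarᵀ * S * lamstar).trace *
        (2 * deltaSym Shat S Λ + (deltaSym Shat S Λ)^2) := by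
  set δ := deltaSym Shat S Λ
  have hstar_pos := hS.trace_transpose_mul_mul_pos_s11 (ne_of_mem_of_not_mem hstar h0)
  have hhat_pos := hShat.trace_transpose_mul_mul_pos_s11 (ne_of_mem_of_not_mem hhat h0)
  have hstar_δ : |1 - (lamstarᵀ * Shat * lamstar).trace / (lamstarᵀ * S * lamstar).trace| ≤ δ :=
    (abs_one_sub_div_le_deltaOne hbdd₁ hstar).trans (le_max_left _ _)
  have hhat_δ : |1 - (lamhatᵀ * S * lamhat).trace / (lamhatᵀ * Shat * lamhat).trace| ≤ δ :=
    (abs_one_sub_div_le_deltaOne hbdd₂ hhat).trans (le_max_right _ _)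
  have hδ : 0 ≤ 1 + δ := by linarith [(abs_nonneg _).trans hstar_δ]
  have key : (lamhatᵀ * S * lamhat).trace ≤ (1 + δ) ^ 2 * (lamstarᵀ * S * lamstar).trace :=
    calc (lamhatᵀ * S * lamhat).trace
        ≤ (1 + δ) * (lamhatᵀ * Shat * lamhat).trace :=
          le_one_add_mul_of_abs_one_sub_div_le hhat_pos hhat_δ
      _ ≤ (1 + δ) * (lamstarᵀ * Shat * lamstar).trace :=
          mul_le_mul_of_nonneg_left (hhatmin lamstar hstar) hδ
      _ ≤ (1 + δ) * ((1 + δ) * (lamstarᵀ * S * lamstar).trace) :=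
          mul_le_mul_of_nonneg_left (le_one_add_mul_of_abs_one_sub_div_le hstar_pos hstar_δ) hδ
      _ = (1 + δ) ^ 2 * (lamstarᵀ * S * lamstar).trace := by ring
  linarith

theorem stmt_11 {k d : ℕ} (S Shat : Matrix (Fin k) (Fin k) ℝ)
    (hS : S.PosDef) (hShat : Shat.PosDef)
    (Λ : Set (Matrix (Fin k) (Fin d) ℝ)) (hne : Λ.Nonempty) (h0 : 0 ∉ Λ)
    (hΛc : IsClosed Λ) (hΛconv : Convex ℝ Λ)
    (hbdd₁ : BddAbove
      ((fun lam => |1 - (lamᵀ * Shat * lam).trace / (lamᵀ * S * lam).trace|) '' Λ))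
    (hbdd₂ : BddAbove
      ((fun lam => |1 - (lamᵀ * S * lam).trace / (lamᵀ * Shat * lam).trace|) '' Λ))
    (lamstar lamhat : Matrix (Fin k) (Fin d) ℝ)
    (hstar : lamstar ∈ Λ)
    (hstarmin : ∀ lam ∈ Λ, (lamstarᵀ * S * lamstar).trace ≤ (lamᵀ * S * lam).trace)
    (hhat : lamhat ∈ Λ)
    (hhatmin : ∀ lam ∈ Λ, (lamhatᵀ * Shat * lamhat).trace ≤ (lamᵀ * Shat * lam).trace) :
    (lamhatᵀ * S * lamhat).trace - (lamstarᵀ * S * lamstar).trace ≤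
      (lamstarᵀ * S * lamstar).trace *
        (2 * deltaSym Shat S Λ + (deltaSym Shat S Λ)^2) :=
  stmt_11_general S Shat hS hShat Λ h0 hbdd₁ hbdd₂ lamstar lamhat hstar hhat hhatmin
end

section
/- (Theorem 1 pointwise bound) Let θ ∈ ℝ^d, T ∈ ℝ^k, J ∈ ℝ^{k×d}, Σ and Σ̂ symmetric positive definite k×k matrices, and Λ a non-empty closed convex subset of {λ ∈ ℝ^{k×d} : λᵀJ = I_d}. Let λ* minimize tr(λᵀΣλ) over Λ, λ̂ minimize tr(λᵀΣ̂λ) over Λ, θ̂* = λ*ᵀT, θ̂ = λ̂ᵀT, and S = Σ^{−1/2}(T − Jθ). Then ‖θ̂ − θ̂*‖² ≤ (2δ + δ²)·‖S‖²·tr(λ*ᵀΣλ*), where δ = δ_Λ(Σ̂, Σ). -/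
/-!
Write `q_M(λ) = tr(λᵀ M λ)`. Since `λ*` minimises the convex quadratic `q_Σ` over the convex
set `Λ`, the first-order condition gives the Pythagorean inequality
`q_Σ(λ̂ - λ*) ≤ q_Σ(λ̂) - q_Σ(λ*)`, and the definition of `δ` together with the minimality of `λ̂`
for `q_Σ̂` gives `q_Σ(λ̂) ≤ (1 + δ) q_Σ̂(λ̂) ≤ (1 + δ) q_Σ̂(λ*) ≤ (1 + δ)² q_Σ(λ*)`. Finally
`θ̂ - θ̂* = (λ̂ - λ*)ᵀ Σ^{1/2} S` because `(λ̂ - λ*)ᵀ J = 0`, and Cauchy–Schwarz bounds its squared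
norm by `‖(λ̂ - λ*)ᵀ Σ^{1/2}‖_F² ‖S‖² = q_Σ(λ̂ - λ*) ‖S‖²`.
-/

open Matrix

lemma nonneg_of_forall_mem_Ioc_mul_add_sq_mul_nonneg {b c : ℝ}
    (h : ∀ t ∈ Set.Ioc (0 : ℝ) 1, 0 ≤ t * b + t ^ 2 * c) : 0 ≤ b := by
  by_contra! hb
  set t := min 1 (-b / (|c| + 1))
  have ht₀ : 0 < t := lt_min one_pos (div_pos (neg_pos.2 hb) (by positivity))
  have ht : t * (|c| + 1) ≤ -b := (le_div_iff₀ (by positivity)).mp (min_le_right _ _)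
  have hlin : 0 ≤ b + t * c :=
    (mul_nonneg_iff_of_pos_left ht₀).mp (by linear_combination h t ⟨ht₀, min_le_left _ _⟩)
  linarith [mul_le_mul_of_nonneg_left (le_abs_self c) ht₀.le]

namespace Matrix

section TraceForm

variable {m n p : Type*} [Fintype m] [Fintype n]

lemma trace_transpose_mul_mul_self_eq_sum (M : Matrix m m ℝ) (A : Matrix m n ℝ) :
    (Aᵀ * M * A).trace = ∑ j, Aᵀ j ⬝ᵥ M *ᵥ Aᵀ j := by
  simp only [trace, diag, mul_apply, transpose_apply, dotProduct, mulVec, Finset.sum_mul,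
    Finset.mul_sum, mul_assoc]
  exact Finset.sum_congr rfl fun j _ => Finset.sum_comm

lemma trace_transpose_mul_mul_self_pos {M : Matrix m m ℝ} (hM : M.PosDef)
    {A : Matrix m n ℝ} (hA : A ≠ 0) : 0 < (Aᵀ * M * A).trace := by
  obtain ⟨j, hj⟩ : ∃ j, Aᵀ j ≠ 0 := by
    by_contra! h
    exact hA (transpose_eq_zero.mp (funext h))
  rw [trace_transpose_mul_mul_self_eq_sum]
  exact Finset.sum_pos' (fun i _ => by simpa using hM.posSemidef.dotProduct_mulVec_nonneg (Aᵀ i))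
    ⟨j, Finset.mem_univ j, by simpa using hM.dotProduct_mulVec_pos hj⟩

lemma trace_add_smul_transpose_mul_mul (M : Matrix m m ℝ) (A D : Matrix m n ℝ) (t : ℝ) :
    ((A + t • D)ᵀ * M * (A + t • D)).trace = (Aᵀ * M * A).trace +
      t * ((Aᵀ * M * D).trace + (Dᵀ * M * A).trace) + t ^ 2 * (Dᵀ * M * D).trace := by
  simp only [transpose_add, transpose_smul, Matrix.add_mul, Matrix.mul_add, Matrix.smul_mul,
    Matrix.mul_smul, trace_add, trace_smul, smul_eq_mul]
  ring

lemma trace_sub_transpose_mul_mul_sub_le_of_isMinOn {M : Matrix m m ℝ}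
    {Λ : Set (Matrix m n ℝ)} (hΛ : Convex ℝ Λ) {A B : Matrix m n ℝ} (hA : A ∈ Λ) (hB : B ∈ Λ)
    (hmin : IsMinOn (fun X => (Xᵀ * M * X).trace) Λ A) :
    ((B - A)ᵀ * M * (B - A)).trace ≤ (Bᵀ * M * B).trace - (Aᵀ * M * A).trace := by
  have hexp := trace_add_smul_transpose_mul_mul M A (B - A)
  have hcross : 0 ≤ (Aᵀ * M * (B - A)).trace + ((B - A)ᵀ * M * A).trace := by
    refine nonneg_of_forall_mem_Ioc_mul_add_sq_mul_nonneg
      (c := ((B - A)ᵀ * M * (B - A)).trace) fun t ht => ?_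
    have hle := isMinOn_iff.mp hmin _ (hΛ.add_smul_sub_mem hA hB (Set.Ioc_subset_Icc_self ht))
    rw [hexp] at hle
    linarith
  have h1 := hexp 1
  rw [one_smul, add_sub_cancel] at h1
  linarith

lemma trace_le_one_add_mul_of_abs_one_sub_div_le {A B : Matrix m m ℝ} (hB : B.PosDef)
    {lam : Matrix m n ℝ} {δ : ℝ}
    (h : |1 - (lamᵀ * A * lam).trace / (lamᵀ * B * lam).trace| ≤ δ) :
    (lamᵀ * A * lam).trace ≤ (1 + δ) * (lamᵀ * B * lam).trace := by
  rcases eq_or_ne lam 0 with rfl | hlam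
  · simp
  · rw [← div_le_iff₀ (trace_transpose_mul_mul_self_pos hB hlam)]
    linarith [(abs_le.mp h).1]

lemma sum_sq_transpose_mulVec_mulVec_le [Fintype p] {M : Matrix m m ℝ} {R : Matrix m p ℝ}
    (hR : R * Rᵀ = M) (D : Matrix m n ℝ) (w : p → ℝ) :
    ∑ j, (Dᵀ *ᵥ (R *ᵥ w)) j ^ 2 ≤ (Dᵀ * M * D).trace * ∑ i, w i ^ 2 := by
  have hfrob : (Dᵀ * M * D).trace = ∑ j, ∑ i, (Dᵀ * R) j i ^ 2 := by
    have hsq : Dᵀ * M * D = Dᵀ * R * (Dᵀ * R)ᵀ := by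
      rw [← hR, transpose_mul, transpose_transpose]
      simp only [Matrix.mul_assoc]
    have htrace (X : Matrix n p ℝ) : (X * Xᵀ).trace = ∑ j, ∑ i, X j i ^ 2 := by
      simp [trace, mul_apply, sq]
    rw [hsq, htrace]
  rw [hfrob, Finset.sum_mul, mulVec_mulVec]
  exact Finset.sum_le_sum fun j _ => Finset.sum_mul_sq_le_sq_mul_sq _ _ _

lemma transpose_mulVec_sub_transpose_mulVec_eq {J : Matrix m n ℝ} {A B : Matrix m p ℝ}
    (h : Aᵀ * J = Bᵀ * J) (T : m → ℝ) (θ : n → ℝ) :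
    Aᵀ *ᵥ T - Bᵀ *ᵥ T = (A - B)ᵀ *ᵥ (T - J *ᵥ θ) := by
  rw [mulVec_sub, mulVec_mulVec, transpose_sub, Matrix.sub_mul, h, sub_self, zero_mulVec,
    sub_zero, sub_mulVec]

end TraceForm

section SquareRoot

variable {m : Type*} [Fintype m] [DecidableEq m]

lemma IsHermitian.eigenvectorUnitary_mul_diagonal_sqrt_mul_star_eq_cfc {S : Matrix m m ℝ}
    (hS : S.IsHermitian) :
    hS.eigenvectorUnitary.1 * diagonal (((↑) : ℝ → ℝ) ∘ Real.sqrt ∘ hS.eigenvalues) *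
      (star hS.eigenvectorUnitary : Matrix m m ℝ) = cfc Real.sqrt S := by
  rw [hS.cfc_eq]
  rfl

lemma PosSemidef.cfc_sqrt_mul_transpose {S : Matrix m m ℝ} (hS : S.PosSemidef) :
    cfc Real.sqrt S * (cfc Real.sqrt S)ᵀ = S := by
  have hsymm : (cfc Real.sqrt S)ᵀ = cfc Real.sqrt S := by
    simpa [IsSelfAdjoint, star_eq_conjTranspose] using
      (cfc_predicate Real.sqrt S : IsSelfAdjoint _)
  rw [hsymm, ← cfc_mul ..]
  conv_rhs => rw [← cfc_id' ℝ S hS.1]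
  exact cfc_congr fun x hx =>
    Real.mul_self_sqrt ((posSemidef_iff_isHermitian_and_spectrum_nonneg.mp hS).2 hx)

lemma PosDef.isUnit_det_cfc_sqrt {S : Matrix m m ℝ} (hS : S.PosDef) :
    IsUnit (cfc Real.sqrt S).det := by
  refine isUnit_of_mul_isUnit_left (y := (cfc Real.sqrt S)ᵀ.det) ?_
  rw [← det_mul, hS.posSemidef.cfc_sqrt_mul_transpose]
  exact hS.det_pos.ne'.isUnit

end SquareRoot

end Matrix

section Delta

variable {k d : ℕ} {A B : Matrix (Fin k) (Fin k) ℝ} {Λ : Set (Matrix (Fin k) (Fin d) ℝ)}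
  {lam : Matrix (Fin k) (Fin d) ℝ}

lemma abs_one_sub_div_le_deltaSym_left
    (hbdd : BddAbove ((fun lam => |1 - (lamᵀ * A * lam).trace / (lamᵀ * B * lam).trace|) '' Λ))
    (hlam : lam ∈ Λ) :
    |1 - (lamᵀ * A * lam).trace / (lamᵀ * B * lam).trace| ≤ deltaSym A B Λ :=
  (le_csSup hbdd ⟨lam, hlam, rfl⟩).trans (le_max_left _ _)

lemma abs_one_sub_div_le_deltaSym_right
    (hbdd : BddAbove ((fun lam => |1 - (lamᵀ * B * lam).trace / (lamᵀ * A * lam).trace|) '' Λ))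
    (hlam : lam ∈ Λ) :
    |1 - (lamᵀ * B * lam).trace / (lamᵀ * A * lam).trace| ≤ deltaSym A B Λ :=
  (le_csSup hbdd ⟨lam, hlam, rfl⟩).trans (le_max_right _ _)

lemma trace_le_one_add_deltaSym_sq_mul_of_isMinOn (hA : A.PosDef) (hB : B.PosDef)
    (hbdd₁ : BddAbove ((fun lam => |1 - (lamᵀ * A * lam).trace / (lamᵀ * B * lam).trace|) '' Λ))
    (hbdd₂ : BddAbove ((fun lam => |1 - (lamᵀ * B * lam).trace / (lamᵀ * A * lam).trace|) '' Λ))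
    {lamA : Matrix (Fin k) (Fin d) ℝ} (hlam : lam ∈ Λ) (hlamA : lamA ∈ Λ)
    (hmin : IsMinOn (fun X => (Xᵀ * A * X).trace) Λ lamA) :
    (lamAᵀ * B * lamA).trace ≤ (1 + deltaSym A B Λ) ^ 2 * (lamᵀ * B * lam).trace := by
  have hδ : 0 ≤ deltaSym A B Λ :=
    (abs_nonneg _).trans (abs_one_sub_div_le_deltaSym_left hbdd₁ hlam)
  calc (lamAᵀ * B * lamA).trace
      ≤ (1 + deltaSym A B Λ) * (lamAᵀ * A * lamA).trace :=
        trace_le_one_add_mul_of_abs_one_sub_div_le hA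
          (abs_one_sub_div_le_deltaSym_right hbdd₂ hlamA)
    _ ≤ (1 + deltaSym A B Λ) * (lamᵀ * A * lam).trace := by
        gcongr
        exact isMinOn_iff.mp hmin _ hlam
    _ ≤ (1 + deltaSym A B Λ) * ((1 + deltaSym A B Λ) * (lamᵀ * B * lam).trace) := by
        gcongr
        exact trace_le_one_add_mul_of_abs_one_sub_div_le hB
          (abs_one_sub_div_le_deltaSym_left hbdd₁ hlam)
    _ = (1 + deltaSym A B Λ) ^ 2 * (lamᵀ * B * lam).trace := by ring

end Delta

theorem stmt_12_general {k d : ℕ} (θ : Fin d → ℝ) (T : Fin k → ℝ)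
    (J : Matrix (Fin k) (Fin d) ℝ)
    (S Shat : Matrix (Fin k) (Fin k) ℝ) (hS : S.PosDef) (hShat : Shat.PosDef)
    (Λ : Set (Matrix (Fin k) (Fin d) ℝ)) (hΛconv : Convex ℝ Λ)
    (hΛsub : Λ ⊆ {lam | lamᵀ * J = 1})
    (hbdd₁ : BddAbove
      ((fun lam => |1 - (lamᵀ * Shat * lam).trace / (lamᵀ * S * lam).trace|) '' Λ))
    (hbdd₂ : BddAbove
      ((fun lam => |1 - (lamᵀ * S * lam).trace / (lamᵀ * Shat * lam).trace|) '' Λ))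
    (lamstar lamhat : Matrix (Fin k) (Fin d) ℝ)
    (hstar : lamstar ∈ Λ)
    (hstarmin : ∀ lam ∈ Λ, (lamstarᵀ * S * lamstar).trace ≤ (lamᵀ * S * lam).trace)
    (hhat : lamhat ∈ Λ)
    (hhatmin : ∀ lam ∈ Λ, (lamhatᵀ * Shat * lamhat).trace ≤ (lamᵀ * Shat * lam).trace) :
    ∑ j, (lamhatᵀ.mulVec T j - lamstarᵀ.mulVec T j)^2 ≤
      (2 * deltaSym Shat S Λ + (deltaSym Shat S Λ)^2) *
        (∑ i, ((hS.posSemidef.1.eigenvectorUnitary.1 * diagonal (((↑) : ℝ → ℝ) ∘ Real.sqrt ∘ hS.posSemidef.1.eigenvalues) *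
            (star hS.posSemidef.1.eigenvectorUnitary : Matrix (Fin k) (Fin k) ℝ))⁻¹.mulVec (fun i' => T i' - J.mulVec θ i') i)^2) *
        (lamstarᵀ * S * lamstar).trace := by
  set δ := deltaSym Shat S Λ
  have hdiff : ((lamhat - lamstar)ᵀ * S * (lamhat - lamstar)).trace ≤
      (2 * δ + δ ^ 2) * (lamstarᵀ * S * lamstar).trace := by
    linear_combination trace_sub_transpose_mul_mul_sub_le_of_isMinOn hΛconv hstar hhat hstarmin +
      trace_le_one_add_deltaSym_sq_mul_of_isMinOn hShat hS hbdd₁ hbdd₂ hstar hhat hhatmin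
  rw [hS.1.eigenvectorUnitary_mul_diagonal_sqrt_mul_star_eq_cfc]
  set R := cfc Real.sqrt S
  have hR : R * Rᵀ = S := hS.posSemidef.cfc_sqrt_mul_transpose
  have hJ : lamhatᵀ * J = lamstarᵀ * J := (hΛsub hhat).trans (hΛsub hstar).symm
  calc ∑ j, ((lamhatᵀ *ᵥ T) j - (lamstarᵀ *ᵥ T) j) ^ 2
      = ∑ j, ((lamhat - lamstar)ᵀ *ᵥ (R *ᵥ (R⁻¹ *ᵥ (T - J *ᵥ θ)))) j ^ 2 := by
        rw [mulVec_mulVec _ R, mul_nonsing_inv R hS.isUnit_det_cfc_sqrt, one_mulVec,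
          ← transpose_mulVec_sub_transpose_mulVec_eq hJ]
        rfl
    _ ≤ ((lamhat - lamstar)ᵀ * S * (lamhat - lamstar)).trace *
          ∑ i, (R⁻¹ *ᵥ (T - J *ᵥ θ)) i ^ 2 :=
        sum_sq_transpose_mulVec_mulVec_le hR _ _
    _ ≤ (2 * δ + δ ^ 2) * (lamstarᵀ * S * lamstar).trace *
          ∑ i, (R⁻¹ *ᵥ (T - J *ᵥ θ)) i ^ 2 := by
        gcongr
    _ = _ := mul_right_comm _ _ _

theorem stmt_12 {k d : ℕ} (θ : Fin d → ℝ) (T : Fin k → ℝ)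
    (J : Matrix (Fin k) (Fin d) ℝ)
    (S Shat : Matrix (Fin k) (Fin k) ℝ) (hS : S.PosDef) (hShat : Shat.PosDef)
    (Λ : Set (Matrix (Fin k) (Fin d) ℝ)) (hne : Λ.Nonempty)
    (hΛc : IsClosed Λ) (hΛconv : Convex ℝ Λ)
    (hΛsub : Λ ⊆ {lam | lamᵀ * J = 1})
    (hbdd₁ : BddAbove
      ((fun lam => |1 - (lamᵀ * Shat * lam).trace / (lamᵀ * S * lam).trace|) '' Λ))
    (hbdd₂ : BddAbove
      ((fun lam => |1 - (lamᵀ * S * lam).trace / (lamᵀ * Shat * lam).trace|) '' Λ))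
    (lamstar lamhat : Matrix (Fin k) (Fin d) ℝ)
    (hstar : lamstar ∈ Λ)
    (hstarmin : ∀ lam ∈ Λ, (lamstarᵀ * S * lamstar).trace ≤ (lamᵀ * S * lam).trace)
    (hhat : lamhat ∈ Λ)
    (hhatmin : ∀ lam ∈ Λ, (lamhatᵀ * Shat * lamhat).trace ≤ (lamᵀ * Shat * lam).trace) :
    ∑ j, (lamhatᵀ.mulVec T j - lamstarᵀ.mulVec T j)^2 ≤
      (2 * deltaSym Shat S Λ + (deltaSym Shat S Λ)^2) *
        (∑ i, ((hS.posSemidef.1.eigenvectorUnitary.1 * diagonal (((↑) : ℝ → ℝ) ∘ Real.sqrt ∘ hS.posSemidef.1.eigenvalues) *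
            (star hS.posSemidef.1.eigenvectorUnitary : Matrix (Fin k) (Fin k) ℝ))⁻¹.mulVec (fun i' => T i' - J.mulVec θ i') i)^2) *
        (lamstarᵀ * S * lamstar).trace :=
  stmt_12_general θ T J S Shat hS hShat Λ hΛconv hΛsub hbdd₁ hbdd₂ lamstar lamhat hstar hstarmin
    hhat hhatmin
end
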